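/- Let A be an abelian category of finite length, and let S be a full subcategory closed under direct sums and direct summands such that Ext¹(S, S) = 0. Suppose Y is an object with Ext¹(S', Y) = 0 for all S' ∈ S, and there are short exact sequences 0 → Y → M → X → 0 and an epimorphism S₀ ↠ Y with S₀ ∈ S such that the kernel also admits an epimorphism from an object of S. If additionally Ext²(X, −) = 0 and Ext¹(X, S₀) = 0, then 0 → Y → M → X → 0 splits. -/

import Mathlib

/-!
The extension `0 → Y → M → X → 0` splits as soon as `Ext¹(X, Y) = 0`, since its class in
`Ext¹(X, Y)` obstructs lifting `𝟙 X` along `M → X`. Applying `Ext(X, -)` to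
`0 → ker q → S₀ → Y → 0` gives the exact piece `Ext¹(X, S₀) → Ext¹(X, Y) → Ext²(X, ker q)`,
whose outer terms vanish.
-/

open CategoryTheory CategoryTheory.Limits

universe w v u

def IsDirectSummand {A : Type u} [Category.{v} A] (P Q : A) : Prop :=
  ∃ (i : P ⟶ Q) (r : Q ⟶ P), i ≫ r = 𝟙 P

namespace CategoryTheory.ShortComplex.ShortExact

open Abelian

variable {C : Type u} [Category.{v} C] [Abelian C] [HasExt.{w} C] {S : ShortComplex C}

lemma exists_section_of_subsingleton_ext (hS : S.ShortExact)
    [Subsingleton (Ext S.X₃ S.X₁ 1)] : ∃ r : S.X₃ ⟶ S.X₂, r ≫ S.g = 𝟙 S.X₃ := by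
  obtain ⟨x, hx⟩ := Ext.covariant_sequence_exact₃ S.X₃ hS (Ext.mk₀ (𝟙 S.X₃)) (zero_add 1)
    (Subsingleton.elim _ _)
  obtain ⟨r, rfl⟩ := (Ext.mk₀_bijective S.X₃ S.X₂).2 x
  exact ⟨r, (Ext.mk₀_bijective _ _).1 (by rwa [Ext.mk₀_comp_mk₀] at hx)⟩

lemma subsingleton_ext_X₃ (hS : S.ShortExact) (X : C) (n : ℕ)
    [Subsingleton (Ext X S.X₂ n)] [Subsingleton (Ext X S.X₁ (n + 1))] :
    Subsingleton (Ext X S.X₃ n) := by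
  refine subsingleton_of_forall_eq 0 fun x ↦ ?_
  obtain ⟨y, rfl⟩ := Ext.covariant_sequence_exact₃ X hS x rfl (Subsingleton.elim _ _)
  rw [Subsingleton.elim y 0, Ext.zero_comp]

end CategoryTheory.ShortComplex.ShortExact

open Abelian in
lemma subsingleton_ext_of_epi {C : Type u} [Category.{v} C] [Abelian C] [HasExt.{w} C]
    {X P Y : C} (q : P ⟶ Y) [Epi q] (n : ℕ)
    [Subsingleton (Ext X P n)] [∀ B : C, Subsingleton (Ext X B (n + 1))] :
    Subsingleton (Ext X Y n) :=
  ShortComplex.ShortExact.subsingleton_ext_X₃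
    (S := ShortComplex.mk _ _ (kernel.condition q)) { exact := ShortComplex.exact_kernel q } X n

/-- in an abelian length category, let `S` be a full subcategory
closed under direct sums and direct summands with `Ext¹(S,S) = 0`. If `Y`
satisfies `Ext¹(S',Y) = 0` for all `S' ∈ S`, `0 → Y → M → X → 0` is exact,
there is an epi `S₀ ↠ Y` with `S₀ ∈ S` whose kernel also admits an epi from an
object of `S`, and `Ext²(X,−) = 0` and `Ext¹(X,S₀) = 0`, then the sequence
`0 → Y → M → X → 0` splits. -/
theorem stmt14 {A : Type u} [Category.{v} A] [Abelian A] [HasExt.{w} A]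
    [HasBinaryBiproducts A]
    [∀ Z : A, IsNoetherianObject Z] [∀ Z : A, IsArtinianObject Z]
    (S : Set A)
    (hsum : ∀ P Q : A, P ∈ S → Q ∈ S → (P ⊞ Q) ∈ S)
    (hsummand : ∀ P Q : A, IsDirectSummand P Q → Q ∈ S → P ∈ S)
    (hrigid : ∀ P ∈ S, ∀ Q ∈ S, Subsingleton (Abelian.Ext P Q 1))
    {Y M X : A}
    (hY : ∀ S' ∈ S, Subsingleton (Abelian.Ext S' Y 1))
    (i : Y ⟶ M) (p : M ⟶ X) (hw : i ≫ p = 0)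
    (hse : (ShortComplex.mk i p hw).ShortExact)
    (S₀ : A) (hS₀ : S₀ ∈ S) (q : S₀ ⟶ Y) (hq : Epi q)
    (hker : ∃ S₁ ∈ S, ∃ e : S₁ ⟶ kernel q, Epi e)
    (hX2 : ∀ B : A, Subsingleton (Abelian.Ext X B 2))
    (hXS₀ : Subsingleton (Abelian.Ext X S₀ 1)) :
    ∃ r : X ⟶ M, r ≫ p = 𝟙 X :=
  have := subsingleton_ext_of_epi (X := X) q 1
  hse.exists_section_of_subsingleton_ext
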